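/- arXiv:2408.07951 — 2 statements merged into one kernel-verified Lean document; each statement's English description precedes it below -/
import Mathlib

section
/- Let G = SU(p, q) with n = p + q, r = min{p, q}, and let L(λ) be a unitarizable highest weight Harish-Chandra module of G with highest weight λ−ρ = λ₀ + zξ. If z = (λ, β∨) = n − 1 − k for a nonnegative integer k, then V(L(λ)) = closure of O_{k(λ)} with k(λ) = min{k, r}; equivalently, when λ is integral the second column of the Robinson–Schensted tableau P(λ) has length min{k, r}. -/
/-! ## The Robinson–Schensted insertion algorithm -/

section RS

variable {α : Type*} [LinearOrder α]

/-- Robinson–Schensted row insertion: insert `x` into a (weakly increasing) row,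
bumping the first entry which is strictly greater than `x`. -/
def rowInsert : List α → α → List α × Option α
  | [], x => ([x], none)
  | y :: ys, x =>
    if x < y then (x :: ys, some y)
    else
      let p := rowInsert ys x
      (y :: p.1, p.2)

/-- Insert an entry into a tableau (recorded as its list of rows), bumping rows downwards. -/
def tableauInsert : List (List α) → α → List (List α)
  | [], x => [[x]]
  | r :: rs, x =>
    match rowInsert r x with
    | (r', none) => r' :: rs
    | (r', some y) => r' :: tableauInsert rs y

/-- The Robinson–Schensted insertion tableau `P(w)` of a word `w`. -/
def RS (w : List α) : List (List α) := w.foldl tableauInsert []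

/-- The shape `𝐩(w)` of the Robinson–Schensted tableau `P(w)`: its list of row lengths. -/
def RSshape (w : List α) : List ℕ := (RS w).map List.length

/-- The length of the `j`-th column (`j = 1, 2, …`) of the tableau `P(w)`. -/
def RScol (w : List α) (j : ℕ) : ℕ := ((RS w).filter fun r => j ≤ r.length).length

end RS

/-- For `λ = (t₁, …, tₙ)`, the sequence `λ⁻ = (t₁, …, tₙ, −tₙ, …, −t₁)`. -/
def minusSeq {α : Type*} [Neg α] (w : List α) : List α := w ++ w.reverse.map (fun x => -x)


set_option maxHeartbeats 1000000

namespace RSAux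

variable {α : Type*} [LinearOrder α]

/-- Two-column tableau from its columns. -/
def toTab : List α → List α → List (List α)
  | C, [] => C.map fun c => [c]
  | [], _ :: _ => []
  | c :: C, d :: D => [c, d] :: toTab C D

/-- One-step automaton on column pairs, mirroring RS insertion. -/
def auto : List α → List α → α → List α × List α
  | [], _, x => ([x], [])
  | c :: C, [], x => if x < c then (x :: c :: C, []) else (c :: C, [x])
  | c :: C, d :: D, x =>
    if x < c then (x :: c :: C, d :: D)
    else
      let p := auto C D d
      (c :: p.1, x :: p.2)

/-- Greedy matching of two sorted (increasing) lists: `(G U V).2` is the list of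
matched `V`-elements, `(G U V).1` the merge of `U` with the unmatched `V`-elements. -/
def G : List α → List α → List α × List α
  | U, [] => (U, [])
  | [], V => (V, [])
  | a :: U, b :: V =>
    if b < a then
      let p := G (a :: U) V
      (b :: p.1, p.2)
    else
      let p := G U V
      (a :: p.1, b :: p.2)
  termination_by U V => U.length + V.length

lemma G_nil_right (U : List α) : G U [] = (U, []) := by rw [G]

lemma G_nil_left (b : α) (V : List α) : G [] (b :: V) = (b :: V, []) := by rw [G]; simp

lemma G_cons_cons (a b : α) (U V : List α) :
    G (a :: U) (b :: V) =
      if b < a then (b :: (G (a :: U) V).1, (G (a :: U) V).2)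
      else (a :: (G U V).1, b :: (G U V).2) := by
  rw [G]

lemma G_mem_fst {U V : List α} {y : α} (h : y ∈ (G U V).1) : y ∈ U ∨ y ∈ V := by
  induction U, V using G.induct with
  | case1 U => rw [G_nil_right] at h; exact Or.inl h
  | case2 V hV =>
      cases V with
      | nil => exact absurd rfl hV
      | cons b V' => rw [G_nil_left] at h; exact Or.inr h
  | case3 a U b V hba ih =>
      rw [G_cons_cons, if_pos hba] at h
      rcases List.mem_cons.1 h with rfl | h
      · simp
      · rcases ih h with h | h
        · exact Or.inl h
        · exact Or.inr (List.mem_cons_of_mem _ h)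
  | case4 a U b V hba ih =>
      rw [G_cons_cons, if_neg hba] at h
      rcases List.mem_cons.1 h with rfl | h
      · simp
      · rcases ih h with h | h
        · exact Or.inl (List.mem_cons_of_mem _ h)
        · exact Or.inr (List.mem_cons_of_mem _ h)

lemma G_mem_snd {U V : List α} {y : α} (h : y ∈ (G U V).2) : y ∈ V := by
  induction U, V using G.induct with
  | case1 U => rw [G_nil_right] at h; simp at h
  | case2 V hV =>
      cases V with
      | nil => exact absurd rfl hV
      | cons b V' => rw [G_nil_left] at h; simp at h
  | case3 a U b V hba ih =>
      rw [G_cons_cons, if_pos hba] at h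
      exact List.mem_cons_of_mem _ (ih h)
  | case4 a U b V hba ih =>
      rw [G_cons_cons, if_neg hba] at h
      rcases List.mem_cons.1 h with rfl | h
      · simp
      · exact List.mem_cons_of_mem _ (ih h)

lemma G_subset_fst {U V : List α} {y : α} (h : y ∈ U) : y ∈ (G U V).1 := by
  induction U, V using G.induct with
  | case1 U => rw [G_nil_right]; exact h
  | case2 V hV => simp at h
  | case3 a U b V hba ih =>
      rw [G_cons_cons, if_pos hba]
      exact List.mem_cons_of_mem _ (ih h)
  | case4 a U b V hba ih =>
      rw [G_cons_cons, if_neg hba]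
      rcases List.mem_cons.1 h with rfl | h
      · simp
      · exact List.mem_cons_of_mem _ (ih h)

lemma G_len_sum (U V : List α) :
    (G U V).1.length + (G U V).2.length = U.length + V.length := by
  induction U, V using G.induct with
  | case1 U => rw [G_nil_right]; try simp
  | case2 V hV =>
      cases V with
      | nil => exact absurd rfl hV
      | cons b V' => rw [G_nil_left]; try simp
  | case3 a U b V hba ih =>
      rw [G_cons_cons, if_pos hba]
      simp only [List.length_cons] at ih ⊢; omega
  | case4 a U b V hba ih =>
      rw [G_cons_cons, if_neg hba]
      simp only [List.length_cons] at ih ⊢; omega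

lemma G_len_snd_le_left (U V : List α) : (G U V).2.length ≤ U.length := by
  induction U, V using G.induct with
  | case1 U => rw [G_nil_right]; try simp
  | case2 V hV =>
      cases V with
      | nil => exact absurd rfl hV
      | cons b V' => rw [G_nil_left]; try simp
  | case3 a U b V hba ih => rw [G_cons_cons, if_pos hba]; exact ih
  | case4 a U b V hba ih =>
      rw [G_cons_cons, if_neg hba]
      simp only [List.length_cons] at ih ⊢; omega

lemma G_len_snd_le_right (U V : List α) : (G U V).2.length ≤ V.length := by
  induction U, V using G.induct with
  | case1 U => rw [G_nil_right]; try simp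
  | case2 V hV =>
      cases V with
      | nil => exact absurd rfl hV
      | cons b V' => rw [G_nil_left]; try simp
  | case3 a U b V hba ih =>
      rw [G_cons_cons, if_pos hba]
      simp only [List.length_cons] at ih ⊢; omega
  | case4 a U b V hba ih =>
      rw [G_cons_cons, if_neg hba]
      simp only [List.length_cons] at ih ⊢; omega

lemma G_len_snd_le_fst (U V : List α) : (G U V).2.length ≤ (G U V).1.length := by
  have h1 := G_len_snd_le_left U V
  have h2 := G_len_snd_le_right U V
  have h3 := G_len_sum U V
  omega

lemma G_pairwise {U V : List α} (hU : U.Pairwise (· < ·)) (hV : V.Pairwise (· < ·)) :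
    (G U V).1.Pairwise (· < ·) ∧ (G U V).2.Pairwise (· < ·) := by
  induction U, V using G.induct with
  | case1 U => rw [G_nil_right]; exact ⟨hU, List.Pairwise.nil⟩
  | case2 V hV' =>
      cases V with
      | nil => exact absurd rfl hV'
      | cons b V' => rw [G_nil_left]; exact ⟨hV, List.Pairwise.nil⟩
  | case3 a U b V hba ih =>
      rw [G_cons_cons, if_pos hba]
      obtain ⟨h1, h2⟩ := ih hU (hV.sublist (List.sublist_cons_self _ _))
      refine ⟨List.pairwise_cons.2 ⟨?_, h1⟩, h2⟩
      intro y hy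
      rcases G_mem_fst hy with h | h
      · rcases List.mem_cons.1 h with rfl | h
        · exact hba
        · exact hba.trans (List.rel_of_pairwise_cons hU h)
      · exact List.rel_of_pairwise_cons hV h
  | case4 a U b V hba ih =>
      rw [G_cons_cons, if_neg hba]
      push_neg at hba
      obtain ⟨h1, h2⟩ := ih (hU.sublist (List.sublist_cons_self _ _))
        (hV.sublist (List.sublist_cons_self _ _))
      constructor
      · refine List.pairwise_cons.2 ⟨?_, h1⟩
        intro y hy
        rcases G_mem_fst hy with h | h
        · exact List.rel_of_pairwise_cons hU h
        · exact lt_of_le_of_lt hba (List.rel_of_pairwise_cons hV h)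
      · refine List.pairwise_cons.2 ⟨?_, h2⟩
        intro y hy
        exact List.rel_of_pairwise_cons hV (G_mem_snd hy)


lemma auto_small {C D : List α} {x : α} (hx : ∀ c ∈ C, x < c) (hlen : D.length ≤ C.length) :
    auto C D x = (x :: C, D) := by
  cases C with
  | nil =>
      have : D = [] := by
        cases D with
        | nil => rfl
        | cons d D' => simp at hlen
      subst this; rfl
  | cons c C' =>
      cases D with
      | nil => rw [auto, if_pos (hx c (by simp))]
      | cons d D' => rw [auto, if_pos (hx c (by simp))]

/-- The key commutation: the automaton step applied to the greedy state of `(U, V)`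
with a new element `x` below everything in `V` yields the greedy state of `(U, x::V)`. -/
lemma auto_G (U : List α) (V : List α) (x : α) (hU : U.Pairwise (· < ·))
    (hV : V.Pairwise (· < ·)) (hx : ∀ b ∈ V, x < b) :
    auto (G U V).1 (G U V).2 x = G U (x :: V) := by
  induction U generalizing V x with
  | nil =>
      cases V with
      | nil => rw [G_nil_right, G_nil_left]; rfl
      | cons b V' =>
          rw [G_nil_left, G_nil_left]
          rw [auto, if_pos (hx b (by simp))]
  | cons a U' ih =>
      by_cases hxa : x < a
      · -- x goes to the bottom of column 1
        have hxC : ∀ c ∈ (G (a :: U') V).1, x < c := by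
          intro c hc
          rcases G_mem_fst hc with h | h
          · rcases List.mem_cons.1 h with rfl | h
            · exact hxa
            · exact hxa.trans (List.rel_of_pairwise_cons hU h)
          · exact hx c h
        rw [auto_small hxC (G_len_snd_le_fst _ _), G_cons_cons, if_pos hxa]
      · -- x ≥ a : x is matched with a
        push_neg at hxa
        cases V with
        | nil =>
            rw [G_nil_right]
            rw [G_cons_cons, if_neg (by push_neg; exact hxa), G_nil_right]
            rw [auto, if_neg (not_lt.2 hxa)]
        | cons b V' =>
            have hxb : x < b := hx b (by simp)
            have hba : ¬ b < a := by push_neg; exact hxa.trans hxb.le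
            have hrec := ih V' b (hU.sublist (List.sublist_cons_self _ _))
              (hV.sublist (List.sublist_cons_self _ _))
              (fun b' hb' => List.rel_of_pairwise_cons hV hb')
            have e1 : G (a :: U') (x :: b :: V')
                = (a :: (G U' (b :: V')).1, x :: (G U' (b :: V')).2) := by
              rw [G_cons_cons, if_neg (not_lt.2 hxa)]
            rw [e1, G_cons_cons, if_neg hba, auto, if_neg (not_lt.2 hxa)]
            simp only [← hrec]

lemma G_nil_left' (V : List α) : G [] V = (V, []) := by
  cases V with
  | nil => exact G_nil_right []
  | cons b V' => exact G_nil_left b V'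

lemma toTab_nil_right (C : List α) : toTab C [] = C.map fun c => [c] := by
  cases C <;> rfl

lemma toTab_cons_cons (c d : α) (C D : List α) :
    toTab (c :: C) (d :: D) = [c, d] :: toTab C D := rfl

lemma rowInsert_lt {x c : α} (cs : List α) (h : x < c) :
    rowInsert (c :: cs) x = (x :: cs, some c) := by
  rw [rowInsert, if_pos h]

lemma rowInsert_single_ge {x c : α} (h : ¬ x < c) :
    rowInsert [c] x = ([c, x], none) := by
  rw [rowInsert, if_neg h]; rfl

lemma rowInsert_pair_mid {x c d : α} (h : ¬ x < c) (h2 : x < d) :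
    rowInsert [c, d] x = ([c, x], some d) := by
  rw [rowInsert, if_neg h, rowInsert, if_pos h2]

lemma tableauInsert_none {r r' : List α} {x : α} (rs : List (List α))
    (h : rowInsert r x = (r', none)) : tableauInsert (r :: rs) x = r' :: rs := by
  rw [tableauInsert, h]

lemma tableauInsert_some {r r' : List α} {x y : α} (rs : List (List α))
    (h : rowInsert r x = (r', some y)) :
    tableauInsert (r :: rs) x = r' :: tableauInsert rs y := by
  rw [tableauInsert, h]

/-- Inserting an element smaller than the whole first column prepends it. -/
lemma insert_small (C : List α) : ∀ (D : List α) (x : α), C.Pairwise (· < ·) →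
    (∀ c ∈ C, x < c) → D.length ≤ C.length →
    tableauInsert (toTab C D) x = toTab (x :: C) D := by
  induction C with
  | nil =>
      intro D x _ _ hlen
      have : D = [] := by cases D with
        | nil => rfl
        | cons d D' => simp at hlen
      subst this
      rfl
  | cons c C' ih =>
      intro D x hC hx hlen
      have hxc : x < c := hx c (by simp)
      have ihc : ∀ D'', D''.length ≤ C'.length →
          tableauInsert (toTab C' D'') c = toTab (c :: C') D'' :=
        fun D'' hD'' => ih D'' c (hC.sublist (List.sublist_cons_self _ _))
          (fun c' hc' => List.rel_of_pairwise_cons hC hc') hD''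
      cases D with
      | nil =>
          rw [toTab_nil_right, List.map_cons,
            tableauInsert_some _ (rowInsert_lt ([] : List α) hxc)]
          have h1 := ihc [] (by simp)
          rw [toTab_nil_right] at h1
          rw [h1, toTab_nil_right, toTab_nil_right]
          simp
      | cons d D' =>
          rw [toTab_cons_cons,
            tableauInsert_some _ (rowInsert_lt [d] hxc), ihc D' (by simpa using hlen)]
          rfl

/-- The simulation lemma: RS insertion on a two-column state is the automaton step. -/
lemma sim (C : List α) : ∀ (D : List α) (x : α), C.Pairwise (· < ·) →
    D.Pairwise (· < ·) → (∀ d ∈ D, x < d) → D.length ≤ C.length →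
    tableauInsert (toTab C D) x = toTab (auto C D x).1 (auto C D x).2 := by
  induction C with
  | nil =>
      intro D x _ _ _ hlen
      have : D = [] := by cases D with
        | nil => rfl
        | cons d D' => simp at hlen
      subst this
      rfl
  | cons c C' ih =>
      intro D x hC hD hxD hlen
      by_cases hxc : x < c
      · have hx : ∀ c' ∈ (c :: C'), x < c' := by
          intro c' hc'
          rcases List.mem_cons.1 hc' with rfl | hc'
          · exact hxc
          · exact hxc.trans (List.rel_of_pairwise_cons hC hc')
        rw [insert_small _ D x hC hx hlen, auto_small hx hlen]
      · cases D with
        | nil =>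
            rw [toTab_nil_right, List.map_cons,
              tableauInsert_none _ (rowInsert_single_ge hxc), auto, if_neg hxc]
            show _ = toTab (c :: C') [x]
            rw [toTab_cons_cons, toTab_nil_right]
        | cons d D' =>
            have hxd : x < d := hxD d (by simp)
            rw [toTab_cons_cons, tableauInsert_some _ (rowInsert_pair_mid hxc hxd)]
            have h1 := ih D' d (hC.sublist (List.sublist_cons_self _ _))
              (hD.sublist (List.sublist_cons_self _ _))
              (fun d' hd' => List.rel_of_pairwise_cons hD hd') (by simpa using hlen)
            rw [auto, if_neg hxc, h1]
            rfl

/-- Folding RS insertion of a decreasing word over a greedy state. -/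
lemma fold_sim (U : List α) (hU : U.Pairwise (· < ·)) :
    ∀ (w V : List α), w.Pairwise (· > ·) → V.Pairwise (· < ·) →
      (∀ x ∈ w, ∀ b ∈ V, x < b) →
      w.foldl tableauInsert (toTab (G U V).1 (G U V).2)
        = toTab (G U (w.reverse ++ V)).1 (G U (w.reverse ++ V)).2 := by
  intro w
  induction w with
  | nil => intro V _ _ _; simp
  | cons x w' ih =>
      intro V hw hV hwV
      have hGp := G_pairwise (U := U) (V := V) hU hV
      have hxV : ∀ b ∈ V, x < b := hwV x (by simp)
      have step : tableauInsert (toTab (G U V).1 (G U V).2) x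
          = toTab (G U (x :: V)).1 (G U (x :: V)).2 := by
        rw [sim _ _ _ hGp.1 hGp.2 (fun d hd => hxV d (G_mem_snd hd)) (G_len_snd_le_fst U V),
          auto_G U V x hU hV hxV]
      have hV' : (x :: V).Pairwise (· < ·) := List.pairwise_cons.2 ⟨hxV, hV⟩
      have hwV' : ∀ y ∈ w', ∀ b ∈ (x :: V), y < b := by
        intro y hy b hb
        rcases List.mem_cons.1 hb with rfl | hb
        · exact List.rel_of_pairwise_cons hw hy
        · exact hwV y (List.mem_cons_of_mem _ hy) b hb
      have := ih (x :: V) (hw.sublist (List.sublist_cons_self _ _)) hV' hwV'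
      rw [List.foldl_cons, step, this]
      have : w'.reverse ++ (x :: V) = (x :: w').reverse ++ V := by simp
      rw [this]

/-- RS of a concatenation of two strictly decreasing words. -/
lemma RS_two_blocks (u v : List α) (hu : u.Pairwise (· > ·)) (hv : v.Pairwise (· > ·)) :
    RS (u ++ v) = toTab (G u.reverse v.reverse).1 (G u.reverse v.reverse).2 := by
  have h1 : RS u = toTab u.reverse [] := by
    have := fold_sim [] List.Pairwise.nil u [] hu List.Pairwise.nil (by simp)
    rw [G_nil_left', List.append_nil, G_nil_left'] at this
    simpa [RS, toTab] using this
  have hUrev : u.reverse.Pairwise (· < ·) := by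
    rw [List.pairwise_reverse]; exact hu
  have h2 := fold_sim u.reverse hUrev v [] hv List.Pairwise.nil (by simp)
  rw [G_nil_right, List.append_nil] at h2
  rw [RS, List.foldl_append, ← RS, h1]
  exact h2

lemma toTab_count (D : List α) : ∀ C : List α, D.length ≤ C.length →
    ((toTab C D).filter fun r => 2 ≤ r.length).length = D.length := by
  induction D with
  | nil =>
      intro C _
      rw [toTab_nil_right]
      induction C with
      | nil => rfl
      | cons c C' ihc => simpa using ihc
  | cons d D' ih =>
      intro C hlen
      cases C with
      | nil => simp at hlen
      | cons c C' =>
          rw [toTab_cons_cons]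
          have := ih C' (by simpa using hlen)
          simp only [List.filter_cons]
          norm_num
          exact this

/-- Upper bound: a "bad pair" bounds the number of matched elements. -/
lemma upper_G (U V : List α) : V.Pairwise (· < ·) →
    ∀ (iU iV : ℕ) (hiU : iU < U.length) (hiV : iV < V.length),
      V.get ⟨iV, hiV⟩ < U.get ⟨iU, hiU⟩ →
      (G U V).2.length ≤ iU + (V.length - 1 - iV) := by
  induction U, V using G.induct with
  | case1 U => intro _ iU iV _ hiV; simp at hiV
  | case2 V hV' => intro _ iU iV hiU; simp at hiU
  | case3 a U b V hba ih =>
      intro hV iU iV hiU hiV hlt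
      rw [G_cons_cons, if_pos hba]
      cases iV with
      | zero =>
          have := G_len_snd_le_right (a :: U) V
          simp only [List.length_cons]
          omega
      | succ j =>
          have hj : j < V.length := by simpa using hiV
          have := ih (hV.sublist (List.sublist_cons_self _ _)) iU j hiU hj
            (by simpa using hlt)
          simp only [List.length_cons]
          omega
  | case4 a U b V hba ih =>
      intro hV iU iV hiU hiV hlt
      rw [G_cons_cons, if_neg hba]
      push_neg at hba
      cases iU with
      | zero =>
          exfalso
          have hb : b ≤ (b :: V).get ⟨iV, hiV⟩ := by
            cases iV with
            | zero => rfl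
            | succ j =>
                exact (List.rel_of_pairwise_cons hV (by
                  simpa using List.get_mem V ⟨j, by simpa using hiV⟩)).le
          have ha : (a :: U).get ⟨0, hiU⟩ = a := rfl
          rw [ha] at hlt
          exact absurd (hba.trans hb) (not_le.2 hlt)
      | succ i =>
          cases iV with
          | zero =>
              have := G_len_snd_le_right U V
              simp only [List.length_cons]
              omega
          | succ j =>
              have hi : i < U.length := by simpa using hiU
              have hj : j < V.length := by simpa using hiV
              have := ih (hV.sublist (List.sublist_cons_self _ _)) i j hi hj
                (by simpa using hlt)
              simp only [List.length_cons]
              omega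

/-- Lower bound: a crosswise system of weak inequalities forces many matches. -/
lemma lower_G (U V : List α) : ∀ (c : ℕ) (hcU : c ≤ U.length) (hcV : c ≤ V.length),
    (∀ s (hs : s < c), U.get ⟨s, by omega⟩ ≤ V.get ⟨V.length - c + s, by omega⟩) →
    c ≤ (G U V).2.length := by
  induction U, V using G.induct with
  | case1 U => intro c _ hcV _; rw [G_nil_right]; simpa using hcV
  | case2 V hV' => intro c hcU _ _; simp at hcU; omega
  | case3 a U b V hba ih =>
      intro c hcU hcV h
      rw [G_cons_cons, if_pos hba]
      rcases Nat.eq_zero_or_pos c with rfl | hc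
      · simp
      have hcV' : c ≤ V.length := by
        by_contra hcon
        have hceq : c = V.length + 1 := by simp at hcV; omega
        have h0 := h 0 hc
        have hfin : (⟨(b :: V).length - c + 0, by omega⟩ : Fin (b :: V).length)
            = ⟨0, by simp⟩ := Fin.ext (by simp only [List.length_cons]; omega)
        rw [hfin] at h0
        have ha : (a :: U).get ⟨0, by omega⟩ = a := rfl
        have hb : (b :: V).get ⟨0, by simp⟩ = b := rfl
        rw [ha, hb] at h0
        exact absurd hba (not_lt.2 h0)
      refine ih c hcU hcV' ?_
      intro s hs
      have := h s hs
      have hidx : (b :: V).length - c + s = (V.length - c + s) + 1 := by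
        simp only [List.length_cons]; omega
      have hg : (b :: V).get ⟨(b :: V).length - c + s, by simp; omega⟩
          = V.get ⟨V.length - c + s, by omega⟩ := by
        have hfin : (⟨(b :: V).length - c + s, by simp; omega⟩ : Fin (b :: V).length)
            = ⟨(V.length - c + s) + 1, by simp; omega⟩ := Fin.ext hidx
        rw [hfin]
        exact List.get_cons_succ
      rw [hg] at this
      exact this
  | case4 a U b V hba ih =>
      intro c hcU hcV h
      rw [G_cons_cons, if_neg hba]
      rcases c with _ | c'
      · simp
      have hcU' : c' ≤ U.length := by simpa using Nat.lt_succ_iff.mp (Nat.lt_of_lt_of_le (Nat.lt_succ_self c') hcU)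
      have hcV' : c' ≤ V.length := by simp at hcV; omega
      have step : c' ≤ (G U V).2.length := by
        refine ih c' hcU' hcV' ?_
        intro s hs
        have := h (s + 1) (by omega)
        have hgU : (a :: U).get ⟨s + 1, by simp; omega⟩ = U.get ⟨s, by omega⟩ := rfl
        have hidx : (b :: V).length - (c' + 1) + (s + 1) = (V.length - c' + s) + 1 := by
          simp only [List.length_cons]; omega
        have hgV : (b :: V).get ⟨(b :: V).length - (c' + 1) + (s + 1), by simp; omega⟩
            = V.get ⟨V.length - c' + s, by omega⟩ := by
          have hfin : (⟨(b :: V).length - (c' + 1) + (s + 1), by simp; omega⟩ : Fin (b :: V).length)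
              = ⟨(V.length - c' + s) + 1, by simp; omega⟩ := Fin.ext hidx
          rw [hfin]
          exact List.get_cons_succ
        rw [hgU, hgV] at this
        exact this
      simp only [List.length_cons]
      omega

end RSAux

/-- Let `G = SU(p, q)`, `n = p + q`, `r = min {p, q}`, and let `L(λ)` be a unitarizable
highest weight Harish-Chandra module of `G` with highest weight `λ − ρ = λ₀ + zξ`.
If `z = (λ, β^∨) = n − 1 − k` for a nonnegative integer `k`, then
`V(L(λ)) = O̅_{k(λ)}` with `k(λ) = min {k, r}`; equivalently, when `λ` is integral the
second column of the Robinson–Schensted tableau `P(λ)` has length `min {k, r}`.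

Here `λ = λ₀ + zξ + ρ = (t₁, …, tₙ)` with `ξ = (q/n, …, q/n, −p/n, …, −p/n)` and
`ρ = ((n−1)/2, (n−3)/2, …, −(n−1)/2)`; `λ₀` has the plateaux prescribed by
Enright–Howe–Wallach, `Q(λ₀) = R(λ₀)` being of type `su(p′, q′)`, and `hU` is the
Enright–Howe–Wallach unitarizability criterion.  `kl` is the integer with
`V(L(λ)) = O̅_{k(λ)}`, a `K_ℂ`-orbit closure in `𝔭⁺`; by Bai–Xiao–Xie (`hAV_int`,
`hAV_nonint`), `k(λ) = q₂`, the length of the second column of `P(λ)`, when `λ` is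
integral, and `k(λ) = r` otherwise. -/
theorem unitary_associated_variety_SU
    (n p : ℕ) (hp : 0 < p) (hpn : p < n)
    (lam0 : Fin n → ℝ)
    -- `Q(λ₀) = R(λ₀)` of type `su(p′, q′)`
    (p' q' : ℕ) (hp' : 1 ≤ p' ∧ p' ≤ p) (hq' : 1 ≤ q' ∧ q' ≤ n - p)
    (hblock₁ : ∀ i j : Fin n, i ≤ j → (j : ℕ) < p → ∃ m : ℕ, lam0 i - lam0 j = (m : ℝ))
    (hblock₂ : ∀ i j : Fin n, p ≤ (i : ℕ) → i ≤ j → ∃ m : ℕ, lam0 i - lam0 j = (m : ℝ))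
    (hplat₁ : ∀ i : Fin n, (i : ℕ) < p' → lam0 i = lam0 ⟨0, by omega⟩)
    (hplat₁' : p' < p → ∀ i : Fin n, (i : ℕ) = p' → lam0 i < lam0 ⟨0, by omega⟩)
    (hplat₂ : ∀ i : Fin n, n - q' ≤ (i : ℕ) → lam0 i = lam0 ⟨n - 1, by omega⟩)
    (hplat₂' : p < n - q' → ∀ i : Fin n, (i : ℕ) = n - q' - 1 →
      lam0 ⟨n - 1, by omega⟩ < lam0 i)
    -- normalization `(λ₀ + ρ, β^∨) = 0`, i.e. `λ₁ − λₙ + n − 1 = 0`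
    (hnorm : lam0 ⟨0, by omega⟩ - lam0 ⟨n - 1, by omega⟩ = -(n : ℝ) + 1)
    -- `z = (λ, β^∨) = n − 1 − k`
    (z : ℝ) (k : ℕ) (hz : z = (n : ℝ) - 1 - k)
    -- Enright–Howe–Wallach: `L(λ)` is unitarizable
    (hU : z ≤ (max p' q' : ℝ) ∨ ((∃ m : ℤ, z = (m : ℝ)) ∧ z ≤ (p' : ℝ) + q' - 1))
    -- `λ = λ₀ + zξ + ρ = (t₁, …, tₙ)`
    (t : Fin n → ℝ)
    (ht : ∀ i : Fin n, t i = lam0 i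
      + z * (if (i : ℕ) < p then ((n : ℝ) - p) / n else -(p : ℝ) / n)
      + ((n : ℝ) - 1) / 2 - (i : ℕ))
    -- `Integral` : the weight `λ` is integral
    (Integral : Prop)
    (hIntegral : Integral ↔ ∃ m : ℤ, t ⟨p - 1, by omega⟩ - t ⟨p, hpn⟩ = (m : ℝ))
    -- `kl = k(λ)` : the integer with `V(L(λ)) = O̅_{k(λ)}` in `𝔭⁺` (Bai–Xiao–Xie)
    (kl : ℕ) (hkl : kl ≤ min p (n - p))
    (hAV_int : Integral → kl = RScol (List.ofFn t) 2)
    (hAV_nonint : ¬ Integral → kl = min p (n - p)) :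
    kl = min k (min p (n - p)) ∧
      (Integral → RScol (List.ofFn t) 2 = min k (min p (n - p))) := by
  have hn0 : 0 < n := by omega
  have hq0 : 0 < n - p := by omega
  have hne : (n : ℝ) ≠ 0 := Nat.cast_ne_zero.mpr (by omega)
  -- normalized value of t
  have htval : ∀ (i : ℕ) (hi : i < n), t ⟨i, hi⟩
      = lam0 ⟨i, hi⟩ + z * (if i < p then ((n : ℝ) - p) / n else -(p : ℝ) / n)
        + ((n : ℝ) - 1) / 2 - i := by
    intro i hi
    have h := ht ⟨i, hi⟩
    simpa using h
  -- the `ξ`-coefficient identity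
  have hzz : z * (((n : ℝ) - p) / n) - z * (-(p : ℝ) / n) = z := by
    field_simp
    ring
  -- Enright–Howe–Wallach bound
  have hEHW : n ≤ k + p' + q' := by
    have h1 : z ≤ (p' : ℝ) + q' - 1 := by
      rcases hU with h | h
      · refine h.trans ?_
        rcases max_cases (p' : ℝ) (q' : ℝ) with ⟨he, _⟩ | ⟨he, _⟩ <;> rw [he]
        · have : (1 : ℝ) ≤ (q' : ℝ) := by exact_mod_cast hq'.1
          linarith
        · have : (1 : ℝ) ≤ (p' : ℝ) := by exact_mod_cast hp'.1
          linarith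
      · exact h.2
    rw [hz] at h1
    have h2 : (n : ℝ) ≤ (k : ℝ) + p' + q' := by linarith
    exact_mod_cast h2
  -- strict decrease within the first block
  have fact1 : ∀ (i j : ℕ) (hij : i < j) (hj : j < p),
      t ⟨j, by omega⟩ < t ⟨i, by omega⟩ := by
    intro i j hij hj
    obtain ⟨m, hm⟩ := hblock₁ ⟨i, by omega⟩ ⟨j, by omega⟩
      (Fin.mk_le_mk.mpr hij.le) (by simpa using hj)
    rw [htval i (by omega), htval j (by omega), if_pos (by omega : i < p), if_pos hj]
    have hc : (i : ℝ) < j := by exact_mod_cast hij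
    have hm0 : (0 : ℝ) ≤ m := Nat.cast_nonneg m
    linarith
  -- strict decrease within the second block
  have fact2 : ∀ (i j : ℕ) (hij : i < j) (hj : j < n - p),
      t ⟨p + j, by omega⟩ < t ⟨p + i, by omega⟩ := by
    intro i j hij hj
    obtain ⟨m, hm⟩ := hblock₂ ⟨p + i, by omega⟩ ⟨p + j, by omega⟩
      (by simpa using Nat.le_add_right p i) (Fin.mk_le_mk.mpr (by omega))
    rw [htval (p + i) (by omega), htval (p + j) (by omega),
      if_neg (by omega : ¬ p + i < p), if_neg (by omega : ¬ p + j < p)]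
    have hc : ((p + i : ℕ) : ℝ) < ((p + j : ℕ) : ℝ) := by exact_mod_cast by omega
    have hm0 : (0 : ℝ) ≤ m := Nat.cast_nonneg m
    push_cast at hc ⊢
    linarith
  -- cross comparison: small gaps are weakly increasing
  have factA : ∀ (i j : ℕ) (hi : i < p) (hpj : p ≤ j) (hj : j < n) (hk : j - i ≤ k),
      t ⟨i, by omega⟩ ≤ t ⟨j, by omega⟩ := by
    intro i j hi hpj hj hk
    obtain ⟨m₁, hm₁⟩ := hblock₁ ⟨0, by omega⟩ ⟨i, by omega⟩
      (Fin.mk_le_mk.mpr (Nat.zero_le i)) (by simpa using hi)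
    obtain ⟨m₂, hm₂⟩ := hblock₂ ⟨j, by omega⟩ ⟨n - 1, by omega⟩
      (by simpa using hpj) (Fin.mk_le_mk.mpr (by omega))
    rw [htval i (by omega), htval j (by omega), if_pos hi, if_neg (by omega : ¬ j < p)]
    have hji : (j : ℝ) ≤ (i : ℝ) + k := by exact_mod_cast by omega
    have hm10 : (0 : ℝ) ≤ m₁ := Nat.cast_nonneg m₁
    have hm20 : (0 : ℝ) ≤ m₂ := Nat.cast_nonneg m₂
    linarith [hnorm]
  -- Integrality of the weight
  have hInt : Integral := by
    rw [hIntegral]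
    obtain ⟨m₁, hm₁⟩ := hblock₁ ⟨0, by omega⟩ ⟨p - 1, by omega⟩
      (Fin.mk_le_mk.mpr (Nat.zero_le _)) (by simp; omega)
    obtain ⟨m₂, hm₂⟩ := hblock₂ ⟨p, by omega⟩ ⟨n - 1, by omega⟩
      (by simp) (Fin.mk_le_mk.mpr (by omega))
    refine ⟨1 - m₁ - m₂ - k, ?_⟩
    rw [htval (p - 1) (by omega), htval p (by omega),
      if_pos (by omega : p - 1 < p), if_neg (by omega : ¬ p < p)]
    have hcast : ((p - 1 : ℕ) : ℝ) = (p : ℝ) - 1 := by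
      have := Nat.cast_sub hp (R := ℝ)
      simpa using this
    push_cast
    rw [hcast]
    linarith [hnorm]
  -- the two blocks as lists
  have hplt : ∀ i : Fin p, (i : ℕ) < n := fun i => lt_of_lt_of_le i.2 hpn.le
  have hqlt : ∀ j : Fin (n - p), p + (j : ℕ) < n := fun j => by have := j.2; omega
  set u : List ℝ := List.ofFn (fun i : Fin p => t ⟨i.1, hplt i⟩) with hu_def
  set v : List ℝ := List.ofFn (fun j : Fin (n - p) => t ⟨p + j.1, hqlt j⟩) with hv_def
  have hulen : u.length = p := by rw [hu_def, List.length_ofFn]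
  have hvlen : v.length = n - p := by rw [hv_def, List.length_ofFn]
  have hUlen : u.reverse.length = p := by rw [List.length_reverse, hulen]
  have hVlen : v.reverse.length = n - p := by rw [List.length_reverse, hvlen]
  have hsplit : List.ofFn t = u ++ v := by
    refine List.ext_getElem (by rw [List.length_append, hulen, hvlen, List.length_ofFn]; omega) ?_
    intro i h1 h2
    rw [List.getElem_ofFn]
    by_cases hip : i < p
    · rw [List.getElem_append_left (by rw [hulen]; exact hip)]
      simp only [hu_def, List.getElem_ofFn]
    · have hpi : p ≤ i := le_of_not_gt hip
      rw [List.getElem_append_right (by rw [hulen]; exact hpi)]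
      simp only [hv_def, List.getElem_ofFn]
      refine congrArg t (Fin.ext ?_)
      simp only [Fin.val_mk]
      rw [hulen]
      have hin : i < n := by simpa using h1
      omega
  have hu_pw : u.Pairwise (· > ·) := by
    rw [hu_def, List.pairwise_iff_getElem]
    intro a b ha hb hab
    simp only [List.getElem_ofFn]
    exact fact1 a b hab (by simpa using hb)
  have hv_pw : v.Pairwise (· > ·) := by
    rw [hv_def, List.pairwise_iff_getElem]
    intro a b ha hb hab
    simp only [List.getElem_ofFn]
    exact fact2 a b hab (by simpa using hb)
  have hU_pw : u.reverse.Pairwise (· < ·) := List.pairwise_reverse.mpr hu_pw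
  have hV_pw : v.reverse.Pairwise (· < ·) := List.pairwise_reverse.mpr hv_pw
  -- getElem descriptions of the reversed blocks
  have hUget : ∀ (s : ℕ) (hs : s < u.reverse.length),
      u.reverse.get ⟨s, hs⟩ = t ⟨p - 1 - s, by omega⟩ := by
    intro s hs
    have hsp : s < p := by rwa [hUlen] at hs
    rw [List.get_eq_getElem, List.getElem_reverse]
    simp only [hu_def, List.getElem_ofFn]
    refine congrArg t (Fin.ext ?_)
    simp only [Fin.val_mk]
    rw [hulen]
  have hVget : ∀ (s : ℕ) (hs : s < v.reverse.length),
      v.reverse.get ⟨s, hs⟩ = t ⟨p + (n - p - 1 - s), by omega⟩ := by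
    intro s hs
    have hsq : s < n - p := by rwa [hVlen] at hs
    rw [List.get_eq_getElem, List.getElem_reverse]
    simp only [hv_def, List.getElem_ofFn]
    refine congrArg t (Fin.ext ?_)
    simp only [Fin.val_mk]
    rw [hvlen]
  -- the second column length
  have hcount : RScol (List.ofFn t) 2 = (RSAux.G u.reverse v.reverse).2.length := by
    unfold RScol
    rw [hsplit, RSAux.RS_two_blocks u v hu_pw hv_pw]
    exact RSAux.toTab_count _ _ (RSAux.G_len_snd_le_fst _ _)
  -- upper bound
  have hupper : (RSAux.G u.reverse v.reverse).2.length ≤ min k (min p (n - p)) := by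
    have hle1 := RSAux.G_len_snd_le_left u.reverse v.reverse
    have hle2 := RSAux.G_len_snd_le_right u.reverse v.reverse
    rw [hUlen] at hle1
    rw [hVlen] at hle2
    rcases lt_or_ge k (min p (n - p)) with hkr | hkr
    · -- strict bad pair from the plateaux and EHW
      set jst : ℕ := max p (n - q') with hjst_def
      set ist : ℕ := jst - (k + 1) with hist_def
      have hks : k + 1 ≤ p := by omega
      have hnqp : n - q' ≤ k + p' := by omega
      have hjb : p ≤ jst ∧ n - q' ≤ jst ∧ jst ≤ n - 1 ∧ jst ≤ k + p' := by
        refine ⟨le_max_left _ _, le_max_right _ _, ?_, ?_⟩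
        · have h1 : p ≤ n - 1 := by omega
          have h2 : n - q' ≤ n - 1 := by omega
          exact max_le h1 h2
        · have h1 : p ≤ k + p' := by omega
          exact max_le h1 hnqp
      have hib : ist < p' ∧ ist < p ∧ ist + (k + 1) = jst := by
        refine ⟨by omega, by omega, by omega⟩
      -- the strict inequality t jst < t ist
      have hlt : t ⟨jst, by omega⟩ < t ⟨ist, by omega⟩ := by
        have hpl1 : lam0 ⟨ist, by omega⟩ = lam0 ⟨0, by omega⟩ :=
          hplat₁ ⟨ist, by omega⟩ (by simpa using hib.1)
        have hpl2 : lam0 ⟨jst, by omega⟩ = lam0 ⟨n - 1, by omega⟩ :=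
          hplat₂ ⟨jst, by omega⟩ (by simpa using hjb.2.1)
        rw [htval ist (by omega), htval jst (by omega),
          if_pos hib.2.1, if_neg (by omega : ¬ jst < p)]
        have hc : (jst : ℝ) = (ist : ℝ) + (k + 1) := by exact_mod_cast by omega
        rw [hpl1, hpl2]
        linarith [hnorm]
      -- feed it to RSAux.upper_G
      have hiU : p - 1 - ist < u.reverse.length := by rw [hUlen]; omega
      have hiV : n - 1 - jst < v.reverse.length := by rw [hVlen]; omega
      have hgu : u.reverse.get ⟨p - 1 - ist, hiU⟩ = t ⟨ist, by omega⟩ := by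
        rw [hUget _ hiU]
        exact congrArg t (Fin.ext (by simp only [Fin.val_mk]; omega))
      have hgv : v.reverse.get ⟨n - 1 - jst, hiV⟩ = t ⟨jst, by omega⟩ := by
        rw [hVget _ hiV]
        exact congrArg t (Fin.ext (by simp only [Fin.val_mk]; omega))
      have hbad : v.reverse.get ⟨n - 1 - jst, hiV⟩ < u.reverse.get ⟨p - 1 - ist, hiU⟩ := by
        rw [hgu, hgv]; exact hlt
      have hub := RSAux.upper_G u.reverse v.reverse hV_pw (p - 1 - ist) (n - 1 - jst) hiU hiV hbad
      rw [hVlen] at hub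
      have : (p - 1 - ist) + (n - p - 1 - (n - 1 - jst)) = k := by omega
      omega
    · omega
  -- lower bound
  have hlower : min k (min p (n - p)) ≤ (RSAux.G u.reverse v.reverse).2.length := by
    set c : ℕ := min k (min p (n - p)) with hc_def
    refine RSAux.lower_G u.reverse v.reverse c (by rw [hUlen]; omega) (by rw [hVlen]; omega) ?_
    intro s hs
    have hVl : v.reverse.length = n - p := hVlen
    rw [hUget s (by rw [hUlen]; omega), hVget _ (by rw [hVlen]; omega)]
    have hE : t ⟨p + (n - p - 1 - (v.reverse.length - c + s)), by omega⟩
        = t ⟨p + (c - 1 - s), by omega⟩ := by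
      refine congrArg t (Fin.ext ?_)
      simp only [Fin.val_mk]
      rw [hVl]
      omega
    rw [hE]
    have := factA (p - 1 - s) (p + (c - 1 - s)) (by omega) (by omega) (by omega) (by omega)
    exact this
  have hcol : RScol (List.ofFn t) 2 = min k (min p (n - p)) := by
    rw [hcount]
    exact le_antisymm hupper hlower
  exact ⟨by rw [hAV_int hInt, hcol], fun _ => hcol⟩
end

section
/- Let t₁, t₂, …, tₙ be real numbers, congruent to one another modulo ℤ, with t₂ > t₃ > … > tₙ > 0, and let t⁻ := (t₁, …, tₙ, −tₙ, …, −t₁) be the sequence of length 2n. Apply the Robinson–Schensted row insertion algorithm to t⁻ and let P(t⁻) be the resulting tableau. If −tₙ < t₁ ≤ t₂, then P(t⁻) has shape [2, 2, 1^{2n−4}] (two columns, of lengths 2n−2 and 2). If t₁ ≤ −tₙ, then P(t⁻) has shape [3, 1^{2n−3}] (three columns, of lengths 2n−2, 1 and 1). -/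
/-!
Write `t⁻ = x y D (-x)` with `x = t₁`, `y = t₂`, so that `y D` is strictly decreasing. After `x ≤ y`
forms the first row, each letter of the decreasing word `D` that is `≥ x` bumps the second entry
of the first row, and each letter `< x` bumps the first entry; the bumped letter is smaller than
every entry below the first row, so it just slides in on top of them. So `P(x y D)` is a hook with
first row `[min (x D), min {z ∈ y D | x ≤ z}]` and `|D|` further one-box rows.
The last letter `-x` is at least the first entry `min (t₁, -t₂)`. If `-tₙ < t₁`, the second entry
is some `tⱼ ≥ tₙ > -t₁`, so it is bumped and sits next to the top of the column, which is `≤ t₁`: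
shape `[2, 2, 1, …]`. If `t₁ ≤ -tₙ`, the second entry is at most `-tₙ ≤ -t₁`, so `-x` is
appended to the first row: shape `[3, 1, …]`.
-/

section Hook

variable {α : Type*} [LinearOrder α]

def hookTableau (a b : α) (c : List α) : List (List α) := [a, b] :: c.map fun x => [x]

lemma head_le_of_pairwise_lt {d z : α} {c : List α} (h : (d :: c).Pairwise (· < ·))
    (hz : z ∈ d :: c) : d ≤ z := by
  rcases List.mem_cons.1 hz with rfl | hz
  exacts [le_rfl, (List.rel_of_pairwise_cons h hz).le]

lemma exists_eq_append_forall_le_forall_lt (x : α) :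
    ∀ {D : List α}, D.Pairwise (· > ·) →
      ∃ A B, D = A ++ B ∧ (∀ z ∈ A, x ≤ z) ∧ ∀ z ∈ B, z < x
  | [], _ => ⟨[], [], rfl, by simp, by simp⟩
  | y :: D, hD => by
    by_cases hxy : x ≤ y
    · obtain ⟨A, B, rfl, hA, hB⟩ := exists_eq_append_forall_le_forall_lt x hD.of_cons
      exact ⟨y :: A, B, rfl, List.forall_mem_cons.2 ⟨hxy, hA⟩, hB⟩
    · refine ⟨[], y :: D, rfl, by simp, List.forall_mem_cons.2 ⟨not_le.1 hxy, ?_⟩⟩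
      exact fun z hz => (List.rel_of_pairwise_cons hD hz).trans (not_le.1 hxy)

lemma RS_append_singleton (w : List α) (e : α) : RS (w ++ [e]) = tableauInsert (RS w) e := by
  simp [RS]

lemma tableauInsert_map_singleton :
    ∀ {v : α} {c : List α}, (v :: c).Pairwise (· < ·) →
      tableauInsert (c.map fun x => [x]) v = (v :: c).map fun x => [x]
  | _, [], _ => rfl
  | v, x :: c, h => by
    have hvx : v < x := List.rel_of_pairwise_cons h List.mem_cons_self
    simp [tableauInsert, rowInsert, hvx, tableauInsert_map_singleton h.of_cons]

lemma tableauInsert_hookTableau_of_lt {a b z : α} {c : List α} (hz : z < a)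
    (hc : (a :: c).Pairwise (· < ·)) :
    tableauInsert (hookTableau a b c) z = hookTableau z b (a :: c) := by
  simp [hookTableau, tableauInsert, rowInsert, hz, tableauInsert_map_singleton hc]

lemma tableauInsert_hookTableau_of_le_of_lt {a b z : α} {c : List α} (haz : a ≤ z) (hzb : z < b)
    (hc : (b :: c).Pairwise (· < ·)) :
    tableauInsert (hookTableau a b c) z = hookTableau a z (b :: c) := by
  simp [hookTableau, tableauInsert, rowInsert, not_lt.2 haz, hzb, tableauInsert_map_singleton hc]

lemma tableauInsert_hookTableau_cons_of_le_of_lt {a b e c₂ : α} {c : List α} (hae : a ≤ e)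
    (heb : e < b) (hc₂ : c₂ ≤ b) :
    tableauInsert (hookTableau a b (c₂ :: c)) e = [a, e] :: [c₂, b] :: c.map fun x => [x] := by
  simp [hookTableau, tableauInsert, rowInsert, not_lt.2 hae, heb, not_lt.2 hc₂]

lemma tableauInsert_hookTableau_of_le_of_le {a b e : α} {c : List α} (hae : a ≤ e) (hbe : b ≤ e) :
    tableauInsert (hookTableau a b c) e = [a, b, e] :: c.map fun x => [x] := by
  simp [hookTableau, tableauInsert, rowInsert, not_lt.2 hae, not_lt.2 hbe]

lemma foldl_tableauInsert_hookTableau_of_le :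
    ∀ {a b d : α} {c c' D : List α}, (∀ z ∈ D, a ≤ z) → ((b :: D).reverse ++ c).Pairwise (· < ·) →
      (b :: D).reverse ++ c = d :: c' →
      D.foldl tableauInsert (hookTableau a b c) = hookTableau a d c'
  | _, _, _, _, _, [], _, _, h => by simp_all
  | a, b, d, c, c', z :: D, hD, hinc, h => by
    have hinc' : ((z :: D).reverse ++ b :: c).Pairwise (· < ·) := by simpa using hinc
    have hzb : z < b := List.pairwise_append.1 hinc' |>.2.2 z (by simp) b List.mem_cons_self
    rw [List.foldl_cons, tableauInsert_hookTableau_of_le_of_lt (hD z List.mem_cons_self) hzb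
      (List.pairwise_append.1 hinc').2.1]
    exact foldl_tableauInsert_hookTableau_of_le (fun y hy => hD y (List.mem_cons_of_mem z hy))
      hinc' (by simpa using h)

lemma foldl_tableauInsert_hookTableau_of_lt :
    ∀ {a b d : α} {c c' D : List α}, ((a :: D).reverse ++ c).Pairwise (· < ·) →
      (a :: D).reverse ++ c = d :: c' →
      D.foldl tableauInsert (hookTableau a b c) = hookTableau d b c'
  | _, _, _, _, _, [], _, h => by simp_all
  | a, b, d, c, c', z :: D, hinc, h => by
    have hinc' : ((z :: D).reverse ++ a :: c).Pairwise (· < ·) := by simpa using hinc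
    have hza : z < a := List.pairwise_append.1 hinc' |>.2.2 z (by simp) a List.mem_cons_self
    rw [List.foldl_cons, tableauInsert_hookTableau_of_lt hza (List.pairwise_append.1 hinc').2.1]
    exact foldl_tableauInsert_hookTableau_of_lt hinc' (by simpa using h)

lemma pairwise_reverse_append {x b : α} {B c : List α} (hxB : (x :: B).Pairwise (· > ·))
    (hxb : x ≤ b) (hc : (b :: c).Pairwise (· < ·)) : ((x :: B).reverse ++ c).Pairwise (· < ·) := by
  refine List.pairwise_append.2 ⟨List.pairwise_reverse.2 hxB, hc.of_cons, fun u hu v hv => ?_⟩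
  have hux : u ≤ x := by
    rcases List.mem_cons.1 (List.mem_reverse.1 hu) with rfl | hu
    exacts [le_rfl, (List.rel_of_pairwise_cons hxB hu).le]
  exact hux.trans_lt (hxb.trans_lt (List.rel_of_pairwise_cons hc hv))

lemma RS_cons_cons_append_eq_hookTableau {x y a b : α} {A B c cA : List α} (hxy : x ≤ y)
    (hA : ∀ z ∈ A, x ≤ z) (hb : (y :: A).reverse = b :: cA) (hincA : (b :: cA).Pairwise (· < ·))
    (ha : (x :: B).reverse ++ cA = a :: c) (hincB : (a :: c).Pairwise (· < ·)) :
    RS (x :: y :: (A ++ B)) = hookTableau a b c := by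
  have hRSxy : RS [x, y] = hookTableau x y [] := by
    simp [RS, hookTableau, tableauInsert, rowInsert, not_lt.2 hxy]
  have hb' : (y :: A).reverse ++ [] = b :: cA := by rw [List.append_nil, hb]
  change (A ++ B).foldl tableauInsert (RS [x, y]) = _
  rw [hRSxy, List.foldl_append, foldl_tableauInsert_hookTableau_of_le hA (hb' ▸ hincA) hb',
    foldl_tableauInsert_hookTableau_of_lt (ha ▸ hincB) ha]

theorem exists_RS_eq_hookTableau {x y : α} {D : List α} (hxy : x ≤ y)
    (hD : (y :: D).Pairwise (· > ·)) :
    ∃ a b c, RS (x :: y :: D) = hookTableau a b c ∧ c.length = D.length ∧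
      (∀ z ∈ x :: D, a ≤ z) ∧ x ≤ b ∧ b ∈ y :: D ∧ (∀ z ∈ y :: D, x ≤ z → b ≤ z) ∧
      ((∃ z ∈ D, z < x) → ∃ c₂ c', c = c₂ :: c' ∧ c₂ ≤ x) := by
  obtain ⟨A, B, rfl, hA, hB⟩ := exists_eq_append_forall_le_forall_lt x hD.of_cons
  have hyA : (y :: A).Pairwise (· > ·) := hD.sublist (by simp)
  have hxB : (x :: B).Pairwise (· > ·) :=
    List.pairwise_cons.2 ⟨hB, hD.of_cons.sublist (List.sublist_append_right A B)⟩
  have hxyA : ∀ z ∈ y :: A, x ≤ z := List.forall_mem_cons.2 ⟨hxy, hA⟩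
  obtain ⟨b, cA, hb⟩ :=
    List.exists_cons_of_ne_nil (List.reverse_ne_nil_iff.2 (List.cons_ne_nil y A))
  obtain ⟨a, c, ha⟩ := List.exists_cons_of_ne_nil
    (List.append_ne_nil_of_left_ne_nil (List.reverse_ne_nil_iff.2 (List.cons_ne_nil x B)) cA)
  have hincA : (b :: cA).Pairwise (· < ·) := hb ▸ List.pairwise_reverse.2 hyA
  have hbA : b ∈ y :: A := List.mem_reverse.1 (hb ▸ List.mem_cons_self)
  have hincB : (a :: c).Pairwise (· < ·) := ha ▸ pairwise_reverse_append hxB (hxyA b hbA) hincA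
  have hxB_mem : ∀ z ∈ x :: B, z ∈ a :: c :=
    fun z hz => ha ▸ List.mem_append_left cA (List.mem_reverse.2 hz)
  have hax : a ≤ x := head_le_of_pairwise_lt hincB (hxB_mem x List.mem_cons_self)
  refine ⟨a, b, c, RS_cons_cons_append_eq_hookTableau hxy hA hb hincA ha hincB, ?_, ?_,
    hxyA b hbA, (List.cons_sublist_cons.2 (List.sublist_append_left A B)).subset hbA, ?_, ?_⟩
  · have hlenA := congrArg List.length hb
    have hlenB := congrArg List.length ha
    simp only [List.length_reverse, List.length_cons, List.length_append] at hlenA hlenB ⊢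
    omega
  · simp only [List.forall_mem_cons, List.forall_mem_append]
    exact ⟨hax, fun z hz => hax.trans (hA z hz),
      fun z hz => head_le_of_pairwise_lt hincB (hxB_mem z (List.mem_cons_of_mem x hz))⟩
  · intro z hz hxz
    refine head_le_of_pairwise_lt hincA (hb ▸ List.mem_reverse.2 ?_)
    simp only [List.mem_cons, List.mem_append] at hz ⊢
    exact hz.imp_right (·.resolve_right fun h => (hB z h).not_ge hxz)
  · rintro ⟨z, hz, hzx⟩
    have hzB : z ∈ B := (List.mem_append.1 hz).resolve_left fun h => (hA z h).not_gt hzx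
    have hxa : x ≠ a := fun h =>
      (h ▸ head_le_of_pairwise_lt hincB (hxB_mem z (List.mem_cons_of_mem x hzB))).not_gt hzx
    have hxc : x ∈ c := (List.mem_cons.1 (hxB_mem x List.mem_cons_self)).resolve_left hxa
    obtain ⟨c₂, c', rfl⟩ := List.exists_cons_of_ne_nil (List.ne_nil_of_mem hxc)
    exact ⟨c₂, c', rfl, head_le_of_pairwise_lt hincB.of_cons hxc⟩

theorem RSshape_eq_two_two_replicate {x y e : α} {D : List α} (hxy : x ≤ y)
    (hD : (y :: D).Pairwise (· > ·)) (hlow : ∃ z ∈ D, z < x ∧ z ≤ e)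
    (hhigh : ∀ z ∈ y :: D, x ≤ z → e < z) :
    RSshape (x :: y :: (D ++ [e])) = 2 :: 2 :: List.replicate (D.length - 1) 1 := by
  obtain ⟨a, b, c, hRS, hlen, ha, hxb, hb, -, hc⟩ := exists_RS_eq_hookTableau hxy hD
  obtain ⟨z, hz, hzx, hze⟩ := hlow
  obtain ⟨c₂, c', rfl, hc₂⟩ := hc ⟨z, hz, hzx⟩
  rw [RSshape, ← List.cons_append, ← List.cons_append, RS_append_singleton, hRS,
    tableauInsert_hookTableau_cons_of_le_of_lt ((ha z (List.mem_cons_of_mem x hz)).trans hze)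
      (hhigh b hb hxb) (hc₂.trans hxb)]
  simp [← hlen, Function.comp_def]

theorem RSshape_eq_three_replicate {x y e : α} {D : List α} (hxy : x ≤ y)
    (hD : (y :: D).Pairwise (· > ·)) (hmid : ∃ z ∈ y :: D, x ≤ z ∧ z ≤ e) :
    RSshape (x :: y :: (D ++ [e])) = 3 :: List.replicate D.length 1 := by
  obtain ⟨a, b, c, hRS, hlen, ha, -, -, hb, -⟩ := exists_RS_eq_hookTableau hxy hD
  obtain ⟨z, hz, hxz, hze⟩ := hmid
  rw [RSshape, ← List.cons_append, ← List.cons_append, RS_append_singleton, hRS,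
    tableauInsert_hookTableau_of_le_of_le ((ha x List.mem_cons_self).trans (hxz.trans hze))
      ((hb z hz hxz).trans hze)]
  simp [← hlen, Function.comp_def]

end Hook

section MinusSeq

lemma minusSeq_cons {α : Type*} [Neg α] (x : α) (w : List α) :
    minusSeq (x :: w) = x :: (minusSeq w ++ [-x]) := by
  simp [minusSeq]

lemma length_minusSeq {α : Type*} [Neg α] (w : List α) : (minusSeq w).length = 2 * w.length := by
  simp only [minusSeq, List.length_append, List.length_map, List.length_reverse]
  omega

lemma mem_minusSeq {α : Type*} [InvolutiveNeg α] {z : α} {w : List α} :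
    z ∈ minusSeq w ↔ z ∈ w ∨ -z ∈ w := by
  simp only [minusSeq, List.mem_append, List.mem_map, List.mem_reverse, neg_eq_iff_eq_neg,
    exists_eq_right]

variable {α : Type*} [AddCommGroup α] [LinearOrder α] [IsOrderedAddMonoid α]

lemma pairwise_minusSeq {w : List α} (hw : w.Pairwise (· > ·)) (hpos : ∀ y ∈ w, 0 < y) :
    (minusSeq w).Pairwise (· > ·) := by
  refine List.pairwise_append.2 ⟨hw, ?_, ?_⟩
  · simpa [List.pairwise_map, List.pairwise_reverse] using hw
  · simp only [List.mem_map, List.mem_reverse]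
    rintro y hy _ ⟨y', hy', rfl⟩
    exact (neg_neg_iff_pos.2 (hpos y' hy')).trans (hpos y hy)

theorem RSshape_minusSeq_of_neg_lt {x y : α} {u : List α} (hdec : (y :: u).Pairwise (· > ·))
    (hpos : ∀ z ∈ y :: u, 0 < z) (hlow : ∀ z ∈ y :: u, -z < x) (hxy : x ≤ y) :
    RSshape (minusSeq (x :: y :: u)) = 2 :: 2 :: List.replicate (2 * u.length) 1 := by
  have hD := pairwise_minusSeq hdec hpos
  rw [minusSeq_cons] at hD
  rw [minusSeq_cons, minusSeq_cons, List.cons_append]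
  convert RSshape_eq_two_two_replicate hxy hD ⟨-y, by simp, hlow y List.mem_cons_self,
    neg_le_neg hxy⟩ ?_ using 3
  · simp [length_minusSeq]
  · rw [← minusSeq_cons]
    intro z hz hxz
    rcases mem_minusSeq.1 hz with hz | hz
    · exact neg_lt.1 (hlow z hz)
    · exact absurd hxz (not_le.2 (by simpa using hlow (-z) hz))

theorem RSshape_minusSeq_of_le_neg {x y : α} {u : List α} (hdec : (y :: u).Pairwise (· > ·))
    (hpos : ∀ z ∈ y :: u, 0 < z) (hx : ∃ z ∈ y :: u, x ≤ -z) :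
    RSshape (minusSeq (x :: y :: u)) = 3 :: List.replicate (2 * u.length + 1) 1 := by
  obtain ⟨z, hz, hxz⟩ := hx
  have hz0 : 0 < z := hpos z hz
  have hxy : x ≤ y := (hxz.trans (neg_nonpos.2 hz0.le)).trans (hpos y List.mem_cons_self).le
  have hD := pairwise_minusSeq hdec hpos
  have hzD : -z ∈ minusSeq (y :: u) := mem_minusSeq.2 (Or.inr (by simpa using hz))
  rw [minusSeq_cons] at hD hzD
  rw [minusSeq_cons, minusSeq_cons, List.cons_append]
  convert RSshape_eq_three_replicate hxy hD
    ⟨-z, hzD, hxz, neg_le_neg (hxz.trans (neg_le_self hz0.le))⟩ using 3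
  simp [length_minusSeq]

end MinusSeq

/-- Let `t₁, …, tₙ` be real numbers, congruent to one another modulo `ℤ`, with
`t₂ > t₃ > ⋯ > tₙ > 0`, and let `t⁻ = (t₁, …, tₙ, −tₙ, …, −t₁)`.  If `−tₙ < t₁ ≤ t₂` then
the Robinson–Schensted insertion tableau `P(t⁻)` has shape `[2, 2, 1^{2n−4}]`
(two columns, of lengths `2n−2` and `2`); if `t₁ ≤ −tₙ` then `P(t⁻)` has shape
`[3, 1^{2n−3}]` (three columns, of lengths `2n−2`, `1` and `1`). -/
theorem rs_shape_type_B
    (n : ℕ) (hn : 2 ≤ n) (t : Fin n → ℝ)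
    (hdec : ∀ i j : Fin n, 1 ≤ (i : ℕ) → i < j → t j < t i)
    (hpos : 0 < t ⟨n - 1, by omega⟩) :
    ((-t ⟨n - 1, by omega⟩ < t ⟨0, by omega⟩ ∧ t ⟨0, by omega⟩ ≤ t ⟨1, by omega⟩) →
      RSshape (minusSeq (List.ofFn t)) = 2 :: 2 :: List.replicate (2 * n - 4) 1) ∧
    (t ⟨0, by omega⟩ ≤ -t ⟨n - 1, by omega⟩ →
      RSshape (minusSeq (List.ofFn t)) = 3 :: List.replicate (2 * n - 3) 1) := by
  obtain ⟨m, rfl⟩ : ∃ m, n = m + 2 := ⟨n - 2, by omega⟩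
  have hs : StrictAnti fun i : Fin (m + 1) => t i.succ :=
    fun i j hij => hdec _ _ (by simp) (Fin.succ_lt_succ_iff.2 hij)
  set u := List.ofFn fun i : Fin m => t i.succ.succ
  have hword : List.ofFn t = t ⟨0, by omega⟩ :: t ⟨1, by omega⟩ :: u := by
    rw [List.ofFn_succ, List.ofFn_succ]; rfl
  have hv : t ⟨1, by omega⟩ :: u = List.ofFn fun i : Fin (m + 1) => t i.succ := by
    rw [List.ofFn_succ]; rfl
  have hvdec : (t ⟨1, by omega⟩ :: u).Pairwise (· > ·) :=
    hv ▸ List.pairwise_ofFn.2 fun _ _ hij => hs hij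
  have hvmin : ∀ z ∈ t ⟨1, by omega⟩ :: u, t ⟨m + 1, by omega⟩ ≤ z := by
    rw [hv]
    intro z hz
    obtain ⟨i, rfl⟩ := List.mem_ofFn.1 hz
    exact hs.antitone (Fin.le_last i)
  have hlast : t ⟨m + 1, by omega⟩ ∈ t ⟨1, by omega⟩ :: u := hv ▸ List.mem_ofFn.2 ⟨Fin.last m, rfl⟩
  have hvpos : ∀ z ∈ t ⟨1, by omega⟩ :: u, 0 < z := fun z hz => hpos.trans_le (hvmin z hz)
  have hu : u.length = m := List.length_ofFn
  rw [hword]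
  refine ⟨fun ⟨hlow, hxy⟩ => ?_, fun hx => ?_⟩
  · rw [RSshape_minusSeq_of_neg_lt hvdec hvpos
      (fun z hz => (neg_le_neg (hvmin z hz)).trans_lt hlow) hxy]
    congr 3; omega
  · rw [RSshape_minusSeq_of_le_neg hvdec hvpos ⟨_, hlast, hx⟩]
    congr 2; omega
end
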